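/- Let φ₁(t) = cosh((2⌊t/(2π)⌋ + 1)π - t)/cosh(π). Then for every fixed real t, lim_{n→∞} φ₁(t/n)^n = e^{-|t|·tanh(π)}. -/

import Mathlib

/-! For `|s| < 2π` the floor in `phi1 s` is `0` or `-1`, so `phi1 s = cosh (π - |s|) / cosh π`,
a function of `|s|` with value `1` and derivative `-tanh π` at `0`. For any `f` with `f 0 = 1`
and `f' 0 = d`, `n * log (f (x / n))` is a difference quotient of `log ∘ f` at `0`, hence
`f (x / n) ^ n → exp (x * d)`. -/

open Real Filter Topology

noncomputable def phi1 (t : ℝ) : ℝ :=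
  Real.cosh ((2 * ⌊t / (2 * π)⌋ + 1) * π - t) / Real.cosh π

theorem tendsto_nat_mul_apply_div_of_hasDerivAt {g : ℝ → ℝ} {d : ℝ} (hg : HasDerivAt g d 0)
    (h0 : g 0 = 0) (x : ℝ) :
    Tendsto (fun n : ℕ => n * g (x / n)) atTop (𝓝 (x * d)) := by
  have hgx : HasDerivAt (fun u => g (u * x)) (d * x) 0 :=
    hg.comp_of_eq 0 (hasDerivAt_mul_const x) (zero_mul x).symm
  have hinv : Tendsto (fun n : ℕ => (n : ℝ)⁻¹) atTop (𝓝[≠] 0) :=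
    tendsto_nhdsWithin_of_tendsto_nhds_of_eventually_within _
      tendsto_inv_atTop_nhds_zero_nat
      (by filter_upwards [eventually_ne_atTop 0] with n hn; simpa using hn)
  refine (hgx.tendsto_slope_zero.comp hinv).congr' ?_ |>.trans (by rw [mul_comm])
  filter_upwards with n
  simp [h0, div_eq_inv_mul]

theorem tendsto_pow_apply_div_of_hasDerivAt {f : ℝ → ℝ} {d : ℝ} (hf : HasDerivAt f d 0)
    (h1 : f 0 = 1) (x : ℝ) :
    Tendsto (fun n : ℕ => f (x / n) ^ n) atTop (𝓝 (exp (x * d))) := by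
  have hlog : HasDerivAt (fun u => log (f u)) d 0 := by
    simpa [h1] using hf.log (by simp [h1])
  have hf_div : Tendsto (fun n : ℕ => f (x / n)) atTop (𝓝 1) :=
    h1 ▸ hf.continuousAt.tendsto.comp (tendsto_const_div_atTop_nhds_zero_nat x)
  refine ((continuous_exp.tendsto _).comp
    (tendsto_nat_mul_apply_div_of_hasDerivAt hlog (by simp [h1]) x)).congr' ?_
  filter_upwards [hf_div.eventually (eventually_gt_nhds one_pos)] with n hn
  simp only [Function.comp_apply, exp_nat_mul, exp_log hn]

theorem phi1_eq_of_abs_lt {s : ℝ} (hs : |s| < 2 * π) :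
    phi1 s = cosh (π - |s|) / cosh π := by
  have h2π : 0 < 2 * π := by positivity
  rcases le_or_gt 0 s with hs0 | hs0
  · have hfloor : ⌊s / (2 * π)⌋ = 0 := by
      rw [Int.floor_eq_zero_iff, Set.mem_Ico, div_lt_one h2π, ← abs_of_nonneg hs0]
      exact ⟨by positivity, hs⟩
    simp [phi1, hfloor, abs_of_nonneg hs0]
  · have hfloor : ⌊s / (2 * π)⌋ = -1 := by
      rw [Int.floor_eq_iff, le_div_iff₀ h2π, div_lt_iff₀ h2π]
      constructor <;> push_cast <;> linarith [neg_abs_le s]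
    rw [phi1, hfloor, abs_of_neg hs0, ← cosh_neg]
    push_cast
    ring_nf

theorem hasDerivAt_cosh_pi_sub_div_cosh_pi :
    HasDerivAt (fun s => cosh (π - s) / cosh π) (-tanh π) 0 := by
  have := (((hasDerivAt_id (0 : ℝ)).const_sub π).cosh).div_const (cosh π)
  simpa [tanh_eq_sinh_div_cosh, neg_div] using this

theorem stmt_8 (t : ℝ) :
    Tendsto (fun n : ℕ => (phi1 (t / n)) ^ n) atTop
      (nhds (Real.exp (-|t| * Real.tanh π))) := by
  have hlim := tendsto_pow_apply_div_of_hasDerivAt hasDerivAt_cosh_pi_sub_div_cosh_pi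
    (by simp [(cosh_pos π).ne']) |t|
  rw [mul_neg, ← neg_mul] at hlim
  refine hlim.congr' ?_
  have hsmall : ∀ᶠ n : ℕ in atTop, |t| / n < 2 * π :=
    (tendsto_const_div_atTop_nhds_zero_nat |t|).eventually (eventually_lt_nhds (by positivity))
  filter_upwards [hsmall] with n hn
  have hn' : |t / n| < 2 * π := by rwa [abs_div, Nat.abs_cast]
  rw [phi1_eq_of_abs_lt hn', abs_div, Nat.abs_cast]
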